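/- arXiv:2605.21167 — 2 statements merged into one kernel-verified Lean document; each statement's English description precedes it below -/
import Mathlib

section
/- Fix ν > 0, r > 0, and let z(l) = √(2ν)·r/l for l > 0. Define k_M(l) = (2^{1−ν}/Γ(ν))·z(l)^ν·K_ν(z(l)). Then ∂(k_M(l)²)/∂l = (2^{3−2ν}/(Γ(ν)²·l))·z(l)^{2ν+1}·K_ν(z(l))·K_{ν−1}(z(l)) > 0; that is, k_M(l)² is strictly increasing in the length scale l. -/
open MeasureTheory Real

/-- The modified Bessel function of the second kind, via its integral
representation K_ν(z) = ∫₀^∞ exp(−z cosh t) cosh(ν t) dt (valid for z > 0). -/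
noncomputable def besselK (ν z : ℝ) : ℝ :=
  ∫ t in Set.Ioi (0 : ℝ), Real.exp (-z * Real.cosh t) * Real.cosh (ν * t)

/-- The Matérn kernel at distance r with length scale l and smoothness ν. -/
noncomputable def maternKernel (ν r l : ℝ) : ℝ :=
  (2 ^ (1 - ν) / Real.Gamma ν) * (Real.sqrt (2 * ν) * r / l) ^ ν *
    besselK ν (Real.sqrt (2 * ν) * r / l)

/-! Differentiating under the integral sign, splitting `cosh t cosh (ν t)` as
`cosh ((ν - 1) t) + sinh t sinh (ν t)` and integrating the second term by parts gives
the recurrence `K_ν' = -(ν / z) K_ν - K_{ν-1}`, i.e. `(z ^ ν K_ν)' = -z ^ ν K_{ν-1}`.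
Through `z = √(2ν) r / l` the chain rule turns this into
`∂k_M/∂l = 2^{1-ν}/Γ(ν) · z^{ν+1} K_{ν-1}(z) / l`, and both Bessel factors are positive
because their integrands are. -/

open Filter Set

namespace Real

theorem cosh_le_exp_abs (x : ℝ) : cosh x ≤ exp |x| := by
  rw [← cosh_abs, cosh_eq]
  have : exp (-|x|) ≤ exp |x| := exp_le_exp.2 (by linarith [abs_nonneg x])
  linarith

theorem abs_sinh_le_cosh (x : ℝ) : |sinh x| ≤ cosh x := by
  rw [abs_sinh, ← cosh_abs]
  exact (sinh_lt_cosh _).le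

theorem cosh_mul_le_exp (b : ℝ) {t : ℝ} (ht : 0 ≤ t) : cosh (b * t) ≤ exp (|b| * t) := by
  simpa [abs_mul, abs_of_nonneg ht] using cosh_le_exp_abs (b * t)

theorem sq_div_four_le_cosh (t : ℝ) : t ^ 2 / 4 ≤ cosh t := by
  have hexp := quadratic_le_exp_of_nonneg (abs_nonneg t)
  rw [← cosh_abs, cosh_eq, ← sq_abs t]
  nlinarith [exp_pos (-|t|), abs_nonneg t]

theorem mul_sub_mul_cosh_le (b : ℝ) {z : ℝ} (hz : 0 < z) (t : ℝ) :
    b * t - z * cosh t ≤ b ^ 2 / z := by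
  rw [le_div_iff₀ hz]
  nlinarith [sq_nonneg (z * t - 2 * b), mul_le_mul_of_nonneg_left (sq_div_four_le_cosh t) hz.le]

theorem exp_neg_mul_cosh_mul_exp_le (b : ℝ) {z : ℝ} (hz : 0 < z) (t : ℝ) :
    exp (-z * cosh t) * exp (b * t) ≤ exp ((b + 1) ^ 2 / z) * exp (-t) := by
  rw [← exp_add, ← exp_add]
  exact exp_le_exp.2 (by linarith [mul_sub_mul_cosh_le (b + 1) hz t])

end Real

section BesselK

variable {z : ℝ}

theorem norm_exp_neg_mul_cosh_mul_le (hz : 0 < z) {f : ℝ → ℝ} {b : ℝ}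
    (hf : ∀ t, 0 ≤ t → |f t| ≤ exp (b * t)) {t : ℝ} (ht : 0 ≤ t) :
    ‖exp (-z * cosh t) * f t‖ ≤ exp ((b + 1) ^ 2 / z) * exp (-t) := by
  rw [norm_mul, norm_of_nonneg (exp_pos _).le, norm_eq_abs]
  exact (mul_le_mul_of_nonneg_left (hf t ht) (exp_pos _).le).trans
    (exp_neg_mul_cosh_mul_exp_le b hz t)

theorem integrableOn_exp_neg_mul_cosh_mul (hz : 0 < z) {f : ℝ → ℝ} {b : ℝ} (hf_cont : Continuous f)
    (hf : ∀ t, 0 ≤ t → |f t| ≤ exp (b * t)) :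
    IntegrableOn (fun t => exp (-z * cosh t) * f t) (Ioi 0) := by
  refine Integrable.mono' ((exp_neg_integrableOn_Ioi 0 one_pos).const_mul (exp ((b + 1) ^ 2 / z)))
    (by fun_prop) ?_
  filter_upwards [ae_restrict_mem measurableSet_Ioi] with t ht
  simpa using norm_exp_neg_mul_cosh_mul_le hz hf (le_of_lt ht)

theorem tendsto_exp_neg_mul_cosh_mul_atTop (hz : 0 < z) {f : ℝ → ℝ} {b : ℝ}
    (hf : ∀ t, 0 ≤ t → |f t| ≤ exp (b * t)) :
    Tendsto (fun t => exp (-z * cosh t) * f t) atTop (nhds 0) := by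
  refine squeeze_zero_norm' ?_
    (by simpa using tendsto_exp_neg_atTop_nhds_zero.const_mul (exp ((b + 1) ^ 2 / z)))
  filter_upwards [eventually_ge_atTop 0] with t ht
  exact norm_exp_neg_mul_cosh_mul_le hz hf ht

theorem abs_cosh_mul_le (ν : ℝ) {t : ℝ} (ht : 0 ≤ t) : |cosh (ν * t)| ≤ exp (|ν| * t) :=
  (abs_of_pos (cosh_pos _)).trans_le (cosh_mul_le_exp ν ht)

theorem abs_sinh_mul_le (ν : ℝ) {t : ℝ} (ht : 0 ≤ t) : |sinh (ν * t)| ≤ exp (|ν| * t) :=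
  (abs_sinh_le_cosh _).trans (cosh_mul_le_exp ν ht)

theorem abs_sinh_mul_sinh_le (ν : ℝ) {t : ℝ} (ht : 0 ≤ t) :
    |sinh t * sinh (ν * t)| ≤ exp ((1 + |ν|) * t) := by
  rw [abs_mul, add_mul, exp_add, one_mul]
  gcongr
  · simpa using abs_sinh_mul_le 1 ht
  · exact abs_sinh_mul_le ν ht

theorem integrableOn_besselK (ν : ℝ) (hz : 0 < z) :
    IntegrableOn (fun t => exp (-z * cosh t) * cosh (ν * t)) (Ioi 0) :=
  integrableOn_exp_neg_mul_cosh_mul hz (by fun_prop) fun _ => abs_cosh_mul_le ν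

theorem integrableOn_sinh_mul_sinh (ν : ℝ) (hz : 0 < z) :
    IntegrableOn (fun t => exp (-z * cosh t) * (sinh t * sinh (ν * t))) (Ioi 0) :=
  integrableOn_exp_neg_mul_cosh_mul hz (by fun_prop) fun _ => abs_sinh_mul_sinh_le ν

theorem besselK_pos (ν : ℝ) (hz : 0 < z) : 0 < besselK ν z := by
  rw [besselK, setIntegral_pos_iff_support_of_nonneg_ae
    (.of_forall fun t => (mul_pos (exp_pos _) (cosh_pos _)).le) (integrableOn_besselK ν hz),
    Function.support_eq_univ fun t => (mul_pos (exp_pos _) (cosh_pos _)).ne', univ_inter]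
  simp

theorem hasDerivAt_besselK_integral (ν : ℝ) (hz : 0 < z) :
    HasDerivAt (besselK ν)
      (-∫ t in Ioi 0, exp (-z * cosh t) * (cosh t * cosh (ν * t))) z := by
  rw [← integral_neg]
  refine (hasDerivAt_integral_of_dominated_loc_of_deriv_le (μ := volume.restrict (Ioi 0))
    (F := fun w t => exp (-w * cosh t) * cosh (ν * t))
    (F' := fun w t => -(exp (-w * cosh t) * (cosh t * cosh (ν * t))))
    (bound := fun t => exp ((|ν| + 1 + 1) ^ 2 / (z / 2)) * exp (-t))
    (Metric.ball_mem_nhds z (half_pos hz)) (.of_forall fun _ => by fun_prop)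
    (integrableOn_besselK ν hz) (by fun_prop) ?_
    (by simpa using (exp_neg_integrableOn_Ioi 0 one_pos).const_mul _) ?_).2
  · filter_upwards [ae_restrict_mem measurableSet_Ioi] with t (ht : 0 < t) w hw
    have hzw : z / 2 ≤ w := by
      rw [Metric.mem_ball, dist_eq, abs_lt] at hw; linarith
    have hexp : exp (-w * cosh t) ≤ exp (-(z / 2) * cosh t) :=
      exp_le_exp.2 (by nlinarith [cosh_pos t])
    have hcosh : |cosh t * cosh (ν * t)| ≤ exp ((|ν| + 1) * t) := by
      rw [add_mul, exp_add, one_mul, mul_comm (exp _)]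
      simpa [abs_mul, abs_of_nonneg ht.le] using mul_le_mul (abs_cosh_mul_le 1 ht.le)
        (abs_cosh_mul_le ν ht.le) (abs_nonneg _) (exp_pos _).le
    rw [norm_neg, norm_mul, norm_of_nonneg (exp_pos _).le, norm_eq_abs]
    exact (mul_le_mul hexp hcosh (abs_nonneg _) (exp_pos _).le).trans
      (exp_neg_mul_cosh_mul_exp_le _ (half_pos hz) t)
  · filter_upwards with t w _
    simpa [mul_assoc] using ((hasDerivAt_id w).neg.mul_const (cosh t)).exp.mul_const (cosh (ν * t))

theorem mul_integral_sinh_mul_sinh (ν : ℝ) (hz : 0 < z) :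
    z * ∫ t in Ioi 0, exp (-z * cosh t) * (sinh t * sinh (ν * t)) = ν * besselK ν z := by
  have hderiv : ∀ t ∈ Ici (0 : ℝ), HasDerivAt (fun t => exp (-z * cosh t) * sinh (ν * t))
      (ν * (exp (-z * cosh t) * cosh (ν * t)) -
        z * (exp (-z * cosh t) * (sinh t * sinh (ν * t)))) t := fun t _ =>
    (((hasDerivAt_cosh t).const_mul (-z)).exp.fun_mul
      ((hasDerivAt_id' t).const_mul ν).sinh).congr_deriv (by ring)
  have hint := ((integrableOn_besselK ν hz).const_mul ν).sub
    ((integrableOn_sinh_mul_sinh ν hz).const_mul z)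
  -- the boundary terms vanish: `sinh 0 = 0`, and `exp (-z cosh t)` kills `sinh (ν t)` at `∞`
  have hG := integral_Ioi_of_hasDerivAt_of_tendsto' hderiv hint
    (tendsto_exp_neg_mul_cosh_mul_atTop hz fun _ => abs_sinh_mul_le ν)
  rw [integral_sub ((integrableOn_besselK ν hz).const_mul ν)
    ((integrableOn_sinh_mul_sinh ν hz).const_mul z), integral_const_mul, integral_const_mul] at hG
  simp only [mul_zero, sinh_zero, sub_zero] at hG
  rw [besselK]
  linarith

theorem hasDerivAt_besselK (ν : ℝ) (hz : 0 < z) :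
    HasDerivAt (besselK ν) (-(ν / z * besselK ν z + besselK (ν - 1) z)) z := by
  have hsplit (t : ℝ) : exp (-z * cosh t) * (cosh t * cosh (ν * t)) =
      exp (-z * cosh t) * (sinh t * sinh (ν * t)) + exp (-z * cosh t) * cosh ((ν - 1) * t) := by
    rw [sub_one_mul, cosh_sub]
    ring
  have hrec : ∫ t in Ioi 0, exp (-z * cosh t) * (sinh t * sinh (ν * t)) = ν / z * besselK ν z := by
    rw [div_mul_eq_mul_div, eq_div_iff hz.ne', mul_comm, mul_integral_sinh_mul_sinh ν hz]
  convert hasDerivAt_besselK_integral ν hz using 2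
  simp only [hsplit]
  rw [integral_add (integrableOn_sinh_mul_sinh ν hz) (integrableOn_besselK (ν - 1) hz), hrec]
  rfl

theorem hasDerivAt_rpow_mul_besselK (ν : ℝ) (hz : 0 < z) :
    HasDerivAt (fun w => w ^ ν * besselK ν w) (-(z ^ ν * besselK (ν - 1) z)) z := by
  refine ((hasDerivAt_rpow_const (Or.inl hz.ne')).mul (hasDerivAt_besselK ν hz)).congr_deriv ?_
  rw [rpow_sub_one hz.ne']
  field_simp
  ring

end BesselK

theorem hasDerivAt_div_rpow_mul_besselK (ν : ℝ) {c l : ℝ} (hc : 0 < c) (hl : 0 < l) :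
    HasDerivAt (fun s => (c / s) ^ ν * besselK ν (c / s))
      ((c / l) ^ (ν + 1) * besselK (ν - 1) (c / l) / l) l := by
  refine ((hasDerivAt_rpow_mul_besselK ν (div_pos hc hl)).comp l
    ((hasDerivAt_inv hl.ne').const_mul c)).congr_deriv ?_
  rw [rpow_add_one (div_pos hc hl).ne']
  field_simp

theorem hasDerivAt_maternKernel {ν r l : ℝ} (hν : 0 < ν) (hr : 0 < r) (hl : 0 < l) :
    HasDerivAt (maternKernel ν r)
      (2 ^ (1 - ν) / Gamma ν * ((√(2 * ν) * r / l) ^ (ν + 1) *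
        besselK (ν - 1) (√(2 * ν) * r / l) / l)) l := by
  have hc : 0 < √(2 * ν) * r := mul_pos (sqrt_pos.2 (by linarith)) hr
  have hk : maternKernel ν r = fun s =>
      2 ^ (1 - ν) / Gamma ν * ((√(2 * ν) * r / s) ^ ν * besselK ν (√(2 * ν) * r / s)) := by
    funext s
    rw [maternKernel, mul_assoc]
  rw [hk]
  exact (hasDerivAt_div_rpow_mul_besselK ν hc hl).const_mul _

/-- The squared Matérn kernel is strictly increasing in the length scale l:
its derivative equals (2^{3−2ν}/(Γ(ν)²·l))·z^{2ν+1}·K_ν(z)·K_{ν−1}(z) > 0,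
where z = √(2ν)·r/l. -/
theorem matern_sq_strictly_increasing_in_lengthscale
    (ν r l : ℝ) (hν : 0 < ν) (hr : 0 < r) (hl : 0 < l) :
    HasDerivAt (fun s : ℝ => (maternKernel ν r s) ^ 2)
      ((2 ^ (3 - 2 * ν) / (Real.Gamma ν ^ 2 * l)) *
        (Real.sqrt (2 * ν) * r / l) ^ (2 * ν + 1) *
        besselK ν (Real.sqrt (2 * ν) * r / l) *
        besselK (ν - 1) (Real.sqrt (2 * ν) * r / l)) l ∧
    0 < (2 ^ (3 - 2 * ν) / (Real.Gamma ν ^ 2 * l)) *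
        (Real.sqrt (2 * ν) * r / l) ^ (2 * ν + 1) *
        besselK ν (Real.sqrt (2 * ν) * r / l) *
        besselK (ν - 1) (Real.sqrt (2 * ν) * r / l) := by
  have hderiv := hasDerivAt_maternKernel hν hr hl
  have hz : 0 < √(2 * ν) * r / l := div_pos (mul_pos (sqrt_pos.2 (by linarith)) hr) hl
  set z := √(2 * ν) * r / l
  have hKν := besselK_pos ν hz
  have hKν₁ := besselK_pos (ν - 1) hz
  refine ⟨(hderiv.pow 2).congr_deriv ?_, by positivity⟩
  have hΓ := (Gamma_pos_of_pos hν).ne'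
  have h2 : (2 : ℝ) ^ (3 - 2 * ν) = 2 * (2 ^ (1 - ν)) ^ 2 := by
    rw [show 3 - 2 * ν = 1 + (1 - ν) * 2 by ring, rpow_add two_pos, rpow_one, rpow_mul two_pos.le,
      rpow_two]
  have hz' : z ^ (2 * ν + 1) = z ^ ν * z ^ (ν + 1) := by
    rw [← rpow_add hz]; ring_nf
  have hkernel : maternKernel ν r l = 2 ^ (1 - ν) / Gamma ν * z ^ ν * besselK ν z := rfl
  rw [hkernel, h2, hz']
  push_cast
  field_simp
end

section
/- Let k̄_1,…,k̄_B be identically distributed with pairwise correlation ρ, and suppose the normalization factors are bounded: the GAC of the aggregate computed by first aggregating then normalizing, K_agg, satisfies 1 − q_max²·(1 − K̄) ≤ K_agg ≤ 1 − q_min²·(1 − K̄), where K̄ := 1 − E[((1/B)Σ_b k̄_b)²] and q_min = min_x k(x,x)/max_x k(x,x), q_max = max_x k(x,x)/min_x k(x,x). -/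
/-!
With `m = inf k(x,x)` and `M = sup k(x,x)`, each per-member normalizer
`√(k(x_b,x_b) k(x'_b,x'_b))` and the aggregated normalizer
`√(mean_b k(x_b,x_b) · mean_b k(x'_b,x'_b))` lie in `[m, M]`.
As `k ≥ 0`, the aggregated ratio and the mean of the per-member ratios therefore both lie in
`[T/M, T/m]`, where `T = mean_b k(x_b,x'_b)`, so each is within a factor `M/m` of the other.
Squaring and integrating gives the sandwich.
-/

open MeasureTheory Finset

theorem mean_mem_Icc {ι : Type*} [Fintype ι] [Nonempty ι] {m M : ℝ} {f : ι → ℝ}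
    (hf : ∀ i, f i ∈ Set.Icc m M) :
    (1 / (Fintype.card ι : ℝ)) * ∑ i, f i ∈ Set.Icc m M := by
  have hcard : (0 : ℝ) < Fintype.card ι := by exact_mod_cast Fintype.card_pos
  have hlow : (Fintype.card ι : ℝ) * m ≤ ∑ i, f i := by
    simpa using card_nsmul_le_sum univ f m fun i _ => (hf i).1
  have hupp : ∑ i, f i ≤ (Fintype.card ι : ℝ) * M := by
    simpa using sum_le_card_nsmul univ f M fun i _ => (hf i).2
  rw [one_div_mul_eq_div]
  exact ⟨(le_div_iff₀' hcard).2 hlow, (div_le_iff₀' hcard).2 hupp⟩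

theorem sqrt_mul_mem_Icc {m M x y : ℝ} (hm : 0 ≤ m) (hx : x ∈ Set.Icc m M)
    (hy : y ∈ Set.Icc m M) :
    √(x * y) ∈ Set.Icc m M := by
  have hM : 0 ≤ M := hm.trans (hx.1.trans hx.2)
  constructor
  · calc m = √(m * m) := (Real.sqrt_mul_self hm).symm
      _ ≤ √(x * y) := Real.sqrt_le_sqrt (mul_le_mul hx.1 hy.1 hm (hm.trans hx.1))
  · calc √(x * y) ≤ √(M * M) :=
          Real.sqrt_le_sqrt (mul_le_mul hx.2 hy.2 (hm.trans hy.1) hM)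
      _ = M := Real.sqrt_mul_self hM

theorem div_mem_Icc_div {m M a d : ℝ} (hm : 0 < m) (ha : 0 ≤ a) (hd : d ∈ Set.Icc m M) :
    a / d ∈ Set.Icc (a / M) (a / m) :=
  ⟨div_le_div_of_nonneg_left ha (hm.trans_le hd.1) hd.2, div_le_div_of_nonneg_left ha hm hd.1⟩

theorem mean_div_mem_Icc {ι : Type*} [Fintype ι] {m M : ℝ} (hm : 0 < m) {a d : ι → ℝ}
    (ha : ∀ i, 0 ≤ a i) (hd : ∀ i, d i ∈ Set.Icc m M) :
    (1 / (Fintype.card ι : ℝ)) * ∑ i, a i / d i ∈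
      Set.Icc (((1 / (Fintype.card ι : ℝ)) * ∑ i, a i) / M)
        (((1 / (Fintype.card ι : ℝ)) * ∑ i, a i) / m) := by
  have h := fun i => div_mem_Icc_div hm (ha i) (hd i)
  rw [mul_div_assoc, mul_div_assoc, sum_div, sum_div]
  exact ⟨mul_le_mul_of_nonneg_left (sum_le_sum fun i _ => (h i).1) (by positivity),
    mul_le_mul_of_nonneg_left (sum_le_sum fun i _ => (h i).2) (by positivity)⟩

theorem sq_bounds_of_mem_Icc_div {m M t u v : ℝ} (hm : 0 < m) (hmM : m ≤ M) (ht : 0 ≤ t)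
    (hu : u ∈ Set.Icc (t / M) (t / m)) (hv : v ∈ Set.Icc (t / M) (t / m)) :
    (m / M) ^ 2 * u ^ 2 ≤ v ^ 2 ∧ v ^ 2 ≤ (M / m) ^ 2 * u ^ 2 := by
  have hM : 0 < M := hm.trans_le hmM
  have hu0 : 0 ≤ u := (div_nonneg ht hM.le).trans hu.1
  have hlow : m / M * u ≤ v :=
    calc m / M * u ≤ m / M * (t / m) := by gcongr; exact hu.2
      _ = t / M := by field_simp
      _ ≤ v := hv.1
  have hupp : v ≤ M / m * u :=
    calc v ≤ t / m := hv.2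
      _ = M / m * (t / M) := by field_simp
      _ ≤ M / m * u := by gcongr; exact hu.1
  rw [← mul_pow, ← mul_pow]
  exact ⟨pow_le_pow_left₀ (by positivity) hlow 2,
    pow_le_pow_left₀ ((div_nonneg ht hM.le).trans hv.1) hupp 2⟩

theorem sq_mean_div_sqrt_mean_mul_mean_bounds {ι : Type*} [Fintype ι] [Nonempty ι]
    {m M : ℝ} (hm : 0 < m) {a c c' : ι → ℝ} (ha : ∀ i, 0 ≤ a i)
    (hc : ∀ i, c i ∈ Set.Icc m M) (hc' : ∀ i, c' i ∈ Set.Icc m M) :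
    (m / M) ^ 2 * ((1 / (Fintype.card ι : ℝ)) * ∑ i, a i / (√(c i) * √(c' i))) ^ 2 ≤
        (((1 / (Fintype.card ι : ℝ)) * ∑ i, a i) /
          √(((1 / (Fintype.card ι : ℝ)) * ∑ i, c i) *
            ((1 / (Fintype.card ι : ℝ)) * ∑ i, c' i))) ^ 2 ∧
      (((1 / (Fintype.card ι : ℝ)) * ∑ i, a i) /
          √(((1 / (Fintype.card ι : ℝ)) * ∑ i, c i) *
            ((1 / (Fintype.card ι : ℝ)) * ∑ i, c' i))) ^ 2 ≤
        (M / m) ^ 2 * ((1 / (Fintype.card ι : ℝ)) * ∑ i, a i / (√(c i) * √(c' i))) ^ 2 := by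
  obtain ⟨i₀⟩ := ‹Nonempty ι›
  have hmean_nonneg : 0 ≤ (1 / (Fintype.card ι : ℝ)) * ∑ i, a i :=
    mul_nonneg (by positivity) (sum_nonneg fun i _ => ha i)
  refine sq_bounds_of_mem_Icc_div hm ((hc i₀).1.trans (hc i₀).2) hmean_nonneg ?_ ?_
  · have hsqrt : ∀ i, √(c i) * √(c' i) = √(c i * c' i) := fun i =>
      (Real.sqrt_mul (hm.le.trans (hc i).1) _).symm
    simp only [hsqrt]
    exact mean_div_mem_Icc hm ha fun i => sqrt_mul_mem_Icc hm.le (hc i) (hc' i)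
  · exact div_mem_Icc_div hm hmean_nonneg
      (sqrt_mul_mem_Icc hm.le (mean_mem_Icc hc) (mean_mem_Icc hc'))

theorem integral_bounds_of_forall_bounds {Ω : Type*} [MeasurableSpace Ω] {μ : Measure Ω}
    {f g : Ω → ℝ} (hf : Integrable f μ) (hg : Integrable g μ) {c C : ℝ}
    (h : ∀ ω, c * g ω ≤ f ω ∧ f ω ≤ C * g ω) :
    c * ∫ ω, g ω ∂μ ≤ ∫ ω, f ω ∂μ ∧ ∫ ω, f ω ∂μ ≤ C * ∫ ω, g ω ∂μ := by
  rw [← integral_const_mul, ← integral_const_mul]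
  exact ⟨integral_mono (hg.const_mul c) hf fun ω => (h ω).1,
    integral_mono hf (hg.const_mul C) fun ω => (h ω).2⟩

theorem ensemble_gac_sandwich_general
    {Ω E : Type*} [MeasurableSpace Ω] (μ : Measure Ω)
    (B : ℕ) (hB : 1 ≤ B)
    (k : E → E → ℝ) (hk : ∀ e e', 0 ≤ k e e')
    (hbdd : BddAbove (Set.range fun e => k e e))
    (hpos : 0 < sInf (Set.range fun e => k e e))
    (X X' : Fin B → Ω → E)
    (hint1 : Integrable (fun ω =>
      (((1 / (B : ℝ)) * ∑ b, k (X b ω) (X' b ω)) /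
        Real.sqrt (((1 / (B : ℝ)) * ∑ b, k (X b ω) (X b ω)) *
          ((1 / (B : ℝ)) * ∑ b, k (X' b ω) (X' b ω)))) ^ 2) μ)
    (hint2 : Integrable (fun ω =>
      ((1 / (B : ℝ)) * ∑ b, k (X b ω) (X' b ω) /
        (Real.sqrt (k (X b ω) (X b ω)) * Real.sqrt (k (X' b ω) (X' b ω)))) ^ 2) μ) :
    (1 - (sSup (Set.range fun e => k e e) / sInf (Set.range fun e => k e e)) ^ 2 *
        (1 - (1 - ∫ ω, ((1 / (B : ℝ)) * ∑ b, k (X b ω) (X' b ω) /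
          (Real.sqrt (k (X b ω) (X b ω)) * Real.sqrt (k (X' b ω) (X' b ω)))) ^ 2 ∂μ))
      ≤ 1 - ∫ ω, (((1 / (B : ℝ)) * ∑ b, k (X b ω) (X' b ω)) /
          Real.sqrt (((1 / (B : ℝ)) * ∑ b, k (X b ω) (X b ω)) *
            ((1 / (B : ℝ)) * ∑ b, k (X' b ω) (X' b ω)))) ^ 2 ∂μ) ∧
    (1 - ∫ ω, (((1 / (B : ℝ)) * ∑ b, k (X b ω) (X' b ω)) /
          Real.sqrt (((1 / (B : ℝ)) * ∑ b, k (X b ω) (X b ω)) *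
            ((1 / (B : ℝ)) * ∑ b, k (X' b ω) (X' b ω)))) ^ 2 ∂μ
      ≤ 1 - (sInf (Set.range fun e => k e e) / sSup (Set.range fun e => k e e)) ^ 2 *
        (1 - (1 - ∫ ω, ((1 / (B : ℝ)) * ∑ b, k (X b ω) (X' b ω) /
          (Real.sqrt (k (X b ω) (X b ω)) * Real.sqrt (k (X' b ω) (X' b ω)))) ^ 2 ∂μ))) := by
  have hbdd_below : BddBelow (Set.range fun e => k e e) :=
    ⟨0, by rintro _ ⟨e, rfl⟩; exact hk e e⟩
  have hdiag : ∀ e, k e e ∈ Set.Icc (sInf (Set.range fun e => k e e))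
      (sSup (Set.range fun e => k e e)) := fun e =>
    ⟨csInf_le hbdd_below ⟨e, rfl⟩, le_csSup hbdd ⟨e, rfl⟩⟩
  have : Nonempty (Fin B) := ⟨⟨0, hB⟩⟩
  have hpointwise := fun ω => sq_mean_div_sqrt_mean_mul_mean_bounds hpos
    (fun b => hk (X b ω) (X' b ω)) (fun b => hdiag (X b ω)) (fun b => hdiag (X' b ω))
  simp only [Fintype.card_fin] at hpointwise
  obtain ⟨hlow, hupp⟩ := integral_bounds_of_forall_bounds hint1 hint2 hpointwise
  constructor <;> linarith

/-- Sandwich bounds for the GAC of an aggregate of B kernel smoothers, when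
aggregation is done before normalization: with
q_min = min_x k(x,x)/max_x k(x,x) and q_max = max_x k(x,x)/min_x k(x,x),
1 − q_max²(1 − K̄) ≤ K_agg ≤ 1 − q_min²(1 − K̄). -/
theorem ensemble_gac_sandwich
    {Ω E : Type*} [MeasurableSpace Ω] (μ : Measure Ω) [IsProbabilityMeasure μ]
    (B : ℕ) (hB : 1 ≤ B)
    (k : E → E → ℝ) (hk : ∀ e e', 0 ≤ k e e')
    (hbdd : BddAbove (Set.range fun e => k e e))
    (hpos : 0 < sInf (Set.range fun e => k e e))
    (hne : (Set.range fun e => k e e).Nonempty)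
    (X X' : Fin B → Ω → E)
    (hint1 : Integrable (fun ω =>
      (((1 / (B : ℝ)) * ∑ b, k (X b ω) (X' b ω)) /
        Real.sqrt (((1 / (B : ℝ)) * ∑ b, k (X b ω) (X b ω)) *
          ((1 / (B : ℝ)) * ∑ b, k (X' b ω) (X' b ω)))) ^ 2) μ)
    (hint2 : Integrable (fun ω =>
      ((1 / (B : ℝ)) * ∑ b, k (X b ω) (X' b ω) /
        (Real.sqrt (k (X b ω) (X b ω)) * Real.sqrt (k (X' b ω) (X' b ω)))) ^ 2) μ) :
    (1 - (sSup (Set.range fun e => k e e) / sInf (Set.range fun e => k e e)) ^ 2 *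
        (1 - (1 - ∫ ω, ((1 / (B : ℝ)) * ∑ b, k (X b ω) (X' b ω) /
          (Real.sqrt (k (X b ω) (X b ω)) * Real.sqrt (k (X' b ω) (X' b ω)))) ^ 2 ∂μ))
      ≤ 1 - ∫ ω, (((1 / (B : ℝ)) * ∑ b, k (X b ω) (X' b ω)) /
          Real.sqrt (((1 / (B : ℝ)) * ∑ b, k (X b ω) (X b ω)) *
            ((1 / (B : ℝ)) * ∑ b, k (X' b ω) (X' b ω)))) ^ 2 ∂μ) ∧
    (1 - ∫ ω, (((1 / (B : ℝ)) * ∑ b, k (X b ω) (X' b ω)) /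
          Real.sqrt (((1 / (B : ℝ)) * ∑ b, k (X b ω) (X b ω)) *
            ((1 / (B : ℝ)) * ∑ b, k (X' b ω) (X' b ω)))) ^ 2 ∂μ
      ≤ 1 - (sInf (Set.range fun e => k e e) / sSup (Set.range fun e => k e e)) ^ 2 *
        (1 - (1 - ∫ ω, ((1 / (B : ℝ)) * ∑ b, k (X b ω) (X' b ω) /
          (Real.sqrt (k (X b ω) (X b ω)) * Real.sqrt (k (X' b ω) (X' b ω)))) ^ 2 ∂μ))) :=
  ensemble_gac_sandwich_general μ B hB k hk hbdd hpos X X' hint1 hint2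
end
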